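/- arXiv:quant-ph/0506054 — 2 statements merged into one kernel-verified Lean document; each statement's English description precedes it below -/
import Mathlib

section
/- Let p be an odd prime and ξ_1,…,ξ_n,η_1,…,η_n a hyperbolic basis of (ZMod p)^{2n}. Let θx(1),…,θx(n) and θz(1),…,θz(n) be complex numbers each of which is a power of ω, and set X̃_i = θx(i)·XZⁿ(η_i) and Z̃_i = θz(i)·XZⁿ(ξ_i). For u, t ∈ (ZMod p)^n define X̃(u) = Π_{i=1}^n X̃_i^{u_i} and Z̃(t) = Π_{i=1}^n Z̃_i^{t_i} (powers via the integer lifts of the coordinates; these matrices pairwise commute). Suppose ψ : (ZMod p)^n → ℂ is a unit vector with Z̃_i·ψ = ψ for all i, and U is a unitary matrix indexed by (ZMod p)^n such that U·δ_u = X̃(u)·ψ for every u ∈ (ZMod p)^n, where δ_u is the standard basis vector at u. Then for all s, t ∈ (ZMod p)^n: U·XZⁿ(s|0)·U* = X̃(s) and U·XZⁿ(0|t)·U* = Z̃(t). -/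
open scoped BigOperators

/-- The phase space `(ZMod p)^n × (ZMod p)^n`, representing `(ZMod p)^{2n}`
written as pairs `(a|b)`. -/
abbrev PV (p n : ℕ) := (Fin n → ZMod p) × (Fin n → ZMod p)

/-- The symplectic inner product `⟨x,y⟩ = ∑ i, (b i * c i - a i * d i)`
for `x = (a|b)`, `y = (c|d)`. -/
def symp {p n : ℕ} (x y : PV p n) : ZMod p :=
  ∑ i, (x.2 i * y.1 i - x.1 i * y.2 i)

/-- `ξ_1,…,ξ_n, η_1,…,η_n` form a hyperbolic basis of `(ZMod p)^{2n}`. -/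
def IsHyperbolicBasis {p n : ℕ} (ξ η : Fin n → PV p n) : Prop :=
  LinearIndependent (ZMod p) (Sum.elim ξ η) ∧
  Submodule.span (ZMod p) (Set.range (Sum.elim ξ η)) = ⊤ ∧
  (∀ i j, symp (ξ i) (η j) = if i = j then 1 else 0) ∧
  (∀ i j, symp (ξ i) (ξ j) = 0) ∧
  (∀ i j, symp (η i) (η j) = 0)

/-- Symplectic orthogonal complement `W^⊥` of a submodule `W`. -/
def sympOrtho {p n : ℕ} (W : Submodule (ZMod p) (PV p n)) :
    Submodule (ZMod p) (PV p n) where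
  carrier := {y | ∀ x ∈ W, symp x y = 0}
  zero_mem' := by intro x hx; simp [symp]
  add_mem' := by
    intro a b ha hb x hx
    have h : symp x (a + b) = symp x a + symp x b := by
      unfold symp
      rw [← Finset.sum_add_distrib]
      refine Finset.sum_congr rfl ?_
      intro i _
      simp only [Prod.fst_add, Prod.snd_add, Pi.add_apply]
      ring
    rw [h, ha x hx, hb x hx, add_zero]
  smul_mem' := by
    intro c a ha x hx
    have h : symp x (c • a) = c * symp x a := by
      unfold symp
      rw [Finset.mul_sum]
      refine Finset.sum_congr rfl ?_
      intro i _
      simp only [Prod.smul_fst, Prod.smul_snd, Pi.smul_apply, smul_eq_mul]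
      ring
    rw [h, ha x hx, mul_zero]

/-- `ω = exp(2πi/p)`. -/
noncomputable def omg (p : ℕ) : ℂ := Complex.exp (2 * Real.pi * Complex.I / p)

/-- The matrix `XZⁿ(v)` for `v = (a|b)`: entry `(r,c)` equals `ω^{b·c}`
if `r = c + a`, and `0` otherwise. -/
noncomputable def XZ {p n : ℕ} (v : PV p n) :
    Matrix (Fin n → ZMod p) (Fin n → ZMod p) ℂ :=
  fun r c => if r = c + v.1 then omg p ^ (∑ i, v.2 i * c i).val else 0

/-- The standard basis vector `δ_u`. -/
def delta {p n : ℕ} (u : Fin n → ZMod p) : (Fin n → ZMod p) → ℂ :=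
  fun v => if v = u then 1 else 0

/-- Ordered product `∏_{i=1}^n (M i)^{u_i}` of matrices, powers via integer lifts. -/
noncomputable def prodPow {p n : ℕ} [NeZero p]
    (M : Fin n → Matrix (Fin n → ZMod p) (Fin n → ZMod p) ℂ)
    (u : Fin n → ZMod p) : Matrix (Fin n → ZMod p) (Fin n → ZMod p) ℂ :=
  ((List.finRange n).map (fun i => (M i) ^ (u i).val)).prod

/-- Splice `e ∈ (ZMod p)^{n-k}` and `x ∈ (ZMod p)^k` into a vector of `(ZMod p)^n`,
identifying `(ZMod p)^n` with `(ZMod p)^{n-k} × (ZMod p)^k`. -/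
def splice {p n k : ℕ} (hk : k ≤ n) (e : Fin (n - k) → ZMod p)
    (x : Fin k → ZMod p) : Fin n → ZMod p :=
  fun i => Fin.append e x (Fin.cast (by omega) i)

/-- The index `n - k + i` of `Fin n`, for `i : Fin k`. -/
def lastIdx {n k : ℕ} (hk : k ≤ n) (i : Fin k) : Fin n :=
  ⟨n - k + i.1, by have := i.2; omega⟩

/-- Kronecker (tensor) product of two vectors. -/
def vecKron {ι : Type*} (f g : ι → ℂ) : ι × ι → ℂ := fun q => f q.1 * g q.2

/-- Entrywise complex conjugate of a vector. -/
def conjVec {ι : Type*} (f : ι → ℂ) : ι → ℂ := fun i => (starRingEnd ℂ) (f i)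

section Aux

variable {p n : ℕ}

noncomputable def zc (p : ℕ) (x : ZMod p) : ℂ := omg p ^ x.val

lemma omg_pow_p [NeZero p] : omg p ^ p = 1 := by
  have hp : (p : ℂ) ≠ 0 := Nat.cast_ne_zero.mpr (NeZero.ne p)
  rw [omg, ← Complex.exp_nat_mul,
    show (p : ℂ) * (2 * Real.pi * Complex.I / p) = 2 * Real.pi * Complex.I by
      field_simp]
  exact Complex.exp_two_pi_mul_I

lemma omg_pow_mod [NeZero p] (a : ℕ) : omg p ^ (a % p) = omg p ^ a := by
  conv_rhs => rw [pow_eq_pow_mod a omg_pow_p]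

lemma zc_add [NeZero p] (x y : ZMod p) : zc p (x + y) = zc p x * zc p y := by
  rw [zc, zc, zc, ZMod.val_add, omg_pow_mod, pow_add]

lemma zc_zero [NeZero p] : zc p (0 : ZMod p) = 1 := by
  rw [zc, ZMod.val_zero, pow_zero]

lemma zc_natCast [NeZero p] (m : ℕ) : zc p ((m : ZMod p)) = omg p ^ m := by
  rw [zc, ZMod.val_natCast, omg_pow_mod]

lemma XZ_apply (v : PV p n) (r c : Fin n → ZMod p) :
    XZ v r c = if r = c + v.1 then zc p (∑ i, v.2 i * c i) else 0 := rfl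

lemma XZ_mul [NeZero p] (v w : PV p n) :
    XZ v * XZ w = zc p (∑ i, v.2 i * w.1 i) • XZ (v + w) := by
  ext r c
  simp only [Matrix.mul_apply, XZ_apply, Matrix.smul_apply, smul_eq_mul]
  rw [Finset.sum_eq_single (c + w.1)]
  · rw [if_pos rfl]
    by_cases h : r = c + (v + w).1
    · rw [if_pos h, if_pos (by rw [h, Prod.fst_add]; module)]
      rw [← zc_add, ← zc_add]
      congr 1
      rw [← Finset.sum_add_distrib, ← Finset.sum_add_distrib]
      refine Finset.sum_congr rfl fun i _ => ?_
      simp only [Pi.add_apply, Prod.snd_add, Prod.fst_add]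
      ring
    · rw [if_neg (fun hc => h (by rw [hc, Prod.fst_add]; module)), zero_mul,
        if_neg h, mul_zero]
  · intro m _ hm
    rw [if_neg hm, mul_zero]
  · intro h
    exact absurd (Finset.mem_univ _) h

lemma XZ_zero [NeZero p] : XZ (0 : PV p n) = 1 := by
  ext r c
  simp [XZ_apply, Matrix.one_apply, zc_zero, eq_comm]

lemma XZ_pow [NeZero p] (v : PV p n) (k : ℕ) :
    XZ v ^ k = zc p ((k.choose 2 : ZMod p) * ∑ i, v.2 i * v.1 i) • XZ (k • v) := by
  induction k with
  | zero => simp [XZ_zero, zc_zero]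
  | succ k ih =>
    rw [pow_succ, ih, Matrix.smul_mul, XZ_mul, smul_smul, ← zc_add]
    have h1 : (∑ i, (k • v).2 i * v.1 i) = (k : ZMod p) * ∑ i, v.2 i * v.1 i := by
      rw [← Nat.cast_smul_eq_nsmul (ZMod p) k v, Finset.mul_sum]
      refine Finset.sum_congr rfl fun i _ => ?_
      simp only [Prod.smul_snd, Pi.smul_apply, smul_eq_mul]
      ring
    have h2 : ((k + 1).choose 2 : ℕ) = k.choose 2 + k := by
      rw [Nat.choose_succ_succ, Nat.choose_one_right, Nat.add_comm]
    have h3 : (k : ℕ) • v + v = (k + 1) • v := by rw [succ_nsmul]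
    rw [h1, h3]
    congr 2
    rw [h2]
    push_cast
    ring

lemma sXZ_pow_p [NeZero p] (hp : p.Prime) (hodd : Odd p) (θ : ℂ) (m : ℕ)
    (hθ : θ = omg p ^ m) (v : PV p n) :
    (θ • XZ v) ^ p = 1 := by
  rw [smul_pow, XZ_pow]
  have h1 : θ ^ p = 1 := by
    rw [hθ, ← pow_mul, mul_comm, pow_mul, omg_pow_p, one_pow]
  have hd : 2 ∣ p - 1 := by
    obtain ⟨k, hk⟩ := hodd; omega
  have h2 : ((p.choose 2 : ℕ) : ZMod p) = 0 := by
    rw [Nat.choose_two_right, Nat.mul_div_assoc p hd, Nat.cast_mul,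
      ZMod.natCast_self, zero_mul]
  have h3 : (p : ℕ) • v = (0 : PV p n) := by
    rw [← Nat.cast_smul_eq_nsmul (ZMod p), ZMod.natCast_self, zero_smul]
  rw [h1, h2, h3, zero_mul, zc_zero, XZ_zero, one_smul, one_smul]

lemma sXZ_comm_phase [NeZero p] (θ₁ θ₂ : ℂ) (v w : PV p n) :
    (θ₁ • XZ v) * (θ₂ • XZ w) = zc p (symp v w) • ((θ₂ • XZ w) * (θ₁ • XZ v)) := by
  rw [Matrix.smul_mul, Matrix.mul_smul, Matrix.smul_mul, Matrix.mul_smul,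
    XZ_mul, XZ_mul, show w + v = v + w from add_comm w v, symp]
  simp only [smul_smul]
  congr 1
  have h : zc p (∑ i, v.2 i * w.1 i)
      = zc p (∑ i, (v.2 i * w.1 i - v.1 i * w.2 i)) * zc p (∑ i, w.2 i * v.1 i) := by
    rw [← zc_add]
    congr 1
    rw [← Finset.sum_add_distrib]
    exact Finset.sum_congr rfl fun i _ => by ring
  rw [h]; ring

variable {ι : Type*} [Fintype ι] [DecidableEq ι]

lemma comm_pow_right [NeZero p] {C D : Matrix ι ι ℂ} {c : ZMod p}
    (h : C * D = zc p c • (D * C)) (m : ℕ) :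
    C * D ^ m = zc p ((m : ZMod p) * c) • (D ^ m * C) := by
  induction m with
  | zero => simp [zc_zero]
  | succ m ih =>
    rw [pow_succ, ← mul_assoc, ih, Matrix.smul_mul, mul_assoc, h,
      Matrix.mul_smul, smul_smul, ← zc_add, ← mul_assoc, ← pow_succ]
    congr 2
    push_cast
    ring

lemma comm_pow_left [NeZero p] {C D : Matrix ι ι ℂ} {c : ZMod p}
    (h : C * D = zc p c • (D * C)) (m : ℕ) :
    C ^ m * D = zc p ((m : ZMod p) * c) • (D * C ^ m) := by
  induction m with
  | zero => simp [zc_zero]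
  | succ m ih =>
    rw [pow_succ, mul_assoc, h, Matrix.mul_smul, ← mul_assoc, ih,
      Matrix.smul_mul, smul_smul, ← zc_add, mul_assoc, ← pow_succ]
    congr 2
    push_cast
    ring

lemma mul_list_phase {κ : Type*} [NeZero p] (C : Matrix ι ι ℂ) (l : List κ)
    (g : κ → Matrix ι ι ℂ) (φ : κ → ZMod p)
    (h : ∀ j ∈ l, C * g j = zc p (φ j) • (g j * C)) :
    C * (l.map g).prod = zc p ((l.map φ).sum) • ((l.map g).prod * C) := by
  induction l with
  | nil => simp [zc_zero]
  | cons a l ih =>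
    simp only [List.map_cons, List.prod_cons, List.sum_cons]
    rw [← mul_assoc, h a (by simp), Matrix.smul_mul, mul_assoc,
      ih (fun j hj => h j (by simp [hj])), Matrix.mul_smul, smul_smul,
      ← zc_add, ← mul_assoc]

lemma list_phase_mul {κ : Type*} [NeZero p] (X : Matrix ι ι ℂ) (l : List κ)
    (g : κ → Matrix ι ι ℂ) (φ : κ → ZMod p)
    (h : ∀ j ∈ l, g j * X = zc p (φ j) • (X * g j)) :
    (l.map g).prod * X = zc p ((l.map φ).sum) • (X * (l.map g).prod) := by
  induction l with
  | nil => simp [zc_zero]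
  | cons a l ih =>
    simp only [List.map_cons, List.prod_cons, List.sum_cons]
    rw [mul_assoc, ih (fun j hj => h j (by simp [hj])), Matrix.mul_smul,
      ← mul_assoc, h a (by simp), Matrix.smul_mul, smul_smul, ← zc_add,
      mul_assoc, add_comm]

lemma list_prod_mul_prod {κ : Type*} (l : List κ) (f g : κ → Matrix ι ι ℂ)
    (h : ∀ i j, Commute (g i) (f j)) :
    (l.map f).prod * (l.map g).prod = (l.map (fun i => f i * g i)).prod := by
  induction l with
  | nil => simp
  | cons a l ih =>
    simp only [List.map_cons, List.prod_cons]
    have hc : Commute (g a) ((l.map f).prod) := by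
      apply Commute.list_prod_right
      intro x hx
      obtain ⟨j, _, rfl⟩ := List.mem_map.1 hx
      exact h a j
    rw [← ih]
    calc f a * (l.map f).prod * (g a * (l.map g).prod)
        = f a * ((l.map f).prod * g a) * (l.map g).prod := by
          simp only [mul_assoc]
      _ = f a * (g a * (l.map f).prod) * (l.map g).prod := by rw [← hc.eq]
      _ = f a * g a * ((l.map f).prod * (l.map g).prod) := by
          simp only [mul_assoc]

lemma prodPow_add [NeZero p] (M : Fin n → Matrix (Fin n → ZMod p) (Fin n → ZMod p) ℂ)
    (hcomm : ∀ i j, Commute (M i) (M j)) (hp : ∀ i, M i ^ p = 1)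
    (u s : Fin n → ZMod p) :
    prodPow M (u + s) = prodPow M u * prodPow M s := by
  rw [prodPow, prodPow, prodPow,
    list_prod_mul_prod _ _ _ (fun i j => (hcomm j i).symm.pow_pow _ _)]
  congr 1
  refine List.map_congr_left fun i _ => ?_
  rw [← pow_add, Pi.add_apply, ZMod.val_add,
    ← pow_eq_pow_mod ((u i).val + (s i).val) (hp i)]

lemma mulVec_delta [NeZero p] (M : Matrix (Fin n → ZMod p) (Fin n → ZMod p) ℂ)
    (u : Fin n → ZMod p) : M.mulVec (delta u) = fun r => M r u := by
  funext r
  simp [Matrix.mulVec, dotProduct, delta, mul_ite]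

lemma matrix_ext_delta [NeZero p] {M N : Matrix (Fin n → ZMod p) (Fin n → ZMod p) ℂ}
    (h : ∀ u, M.mulVec (delta u) = N.mulVec (delta u)) : M = N := by
  ext r c
  have := congrFun (h c) r
  simpa [mulVec_delta] using this

lemma XZ_s0_mulVec [NeZero p] (s u : Fin n → ZMod p) :
    (XZ ((s, 0) : PV p n)).mulVec (delta u) = delta (u + s) := by
  rw [mulVec_delta]
  funext r
  simp [XZ_apply, delta, zc_zero]

lemma XZ_0t_mulVec [NeZero p] (t u : Fin n → ZMod p) :
    (XZ ((0, t) : PV p n)).mulVec (delta u)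
      = zc p (∑ i, t i * u i) • delta u := by
  rw [mulVec_delta]
  funext r
  simp only [XZ_apply, Pi.smul_apply, delta, smul_eq_mul]
  by_cases h : r = u
  · rw [if_pos (by simp [h]), if_pos h, mul_one]
  · rw [if_neg (by simpa using h), if_neg h, mul_zero]

lemma mulVec_pow_fix {M : Matrix ι ι ℂ} {ψ : ι → ℂ}
    (h : M.mulVec ψ = ψ) (k : ℕ) : (M ^ k).mulVec ψ = ψ := by
  induction k with
  | zero => simp
  | succ k ih => rw [pow_succ, ← Matrix.mulVec_mulVec, h, ih]

lemma list_prod_mulVec_fix (l : List (Matrix ι ι ℂ)) (ψ : ι → ℂ)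
    (h : ∀ M ∈ l, M.mulVec ψ = ψ) : l.prod.mulVec ψ = ψ := by
  induction l with
  | nil => simp
  | cons a l ih =>
    rw [List.prod_cons, ← Matrix.mulVec_mulVec, ih (fun M hM => h M (by simp [hM])),
      h a (by simp)]

end Aux

/-- the encoding operator `U` constructed from a hyperbolic basis
conjugates `XZⁿ(s|0)` to the encoded `X̃(s)` and `XZⁿ(0|t)` to the encoded `Z̃(t)`. -/
theorem stmt5 (p n : ℕ) [Fact p.Prime] (hodd : Odd p)
    (ξ η : Fin n → PV p n) (hb : IsHyperbolicBasis ξ η)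
    (θx θz : Fin n → ℂ)
    (hθx : ∀ i, ∃ m : ℕ, θx i = omg p ^ m)
    (hθz : ∀ i, ∃ m : ℕ, θz i = omg p ^ m)
    (ψ : (Fin n → ZMod p) → ℂ)
    (hψnorm : ∑ v, Complex.normSq (ψ v) = 1)
    (hψ : ∀ i, (θz i • XZ (ξ i)).mulVec ψ = ψ)
    (U : Matrix (Fin n → ZMod p) (Fin n → ZMod p) ℂ)
    (hU : U * U.conjTranspose = 1 ∧ U.conjTranspose * U = 1)
    (hUdef : ∀ u : Fin n → ZMod p,
      U.mulVec (delta u) = (prodPow (fun i => θx i • XZ (η i)) u).mulVec ψ) :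
    (∀ s : Fin n → ZMod p,
      U * XZ (s, 0) * U.conjTranspose = prodPow (fun i => θx i • XZ (η i)) s) ∧
    (∀ t : Fin n → ZMod p,
      U * XZ (0, t) * U.conjTranspose = prodPow (fun i => θz i • XZ (ξ i)) t) := by
  have hp : p.Prime := Fact.out
  have hNZ : NeZero p := ⟨hp.ne_zero⟩
  obtain ⟨hind, hspan, hξη, hξξ, hηη⟩ := hb
  set A : Fin n → Matrix (Fin n → ZMod p) (Fin n → ZMod p) ℂ :=
    fun i => θx i • XZ (η i) with hA
  set B : Fin n → Matrix (Fin n → ZMod p) (Fin n → ZMod p) ℂ :=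
    fun i => θz i • XZ (ξ i) with hB
  have hAcomm : ∀ i j, Commute (A i) (A j) := by
    intro i j
    have h := sXZ_comm_phase (θx i) (θx j) (η i) (η j)
    rw [hηη i j, zc_zero, one_smul] at h
    exact h
  have hApow : ∀ i, A i ^ p = 1 := by
    intro i
    obtain ⟨m, hm⟩ := hθx i
    exact sXZ_pow_p hp hodd _ m hm _
  have hBA : ∀ i j, B i * A j
      = zc p (if i = j then 1 else 0) • (A j * B i) := by
    intro i j
    have h := sXZ_comm_phase (θz i) (θx j) (ξ i) (η j)
    rw [hξη i j] at h
    exact h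
  -- B i moves past prodPow A u with phase u i
  have hBX : ∀ (i : Fin n) (u : Fin n → ZMod p),
      B i * prodPow A u = zc p (u i) • (prodPow A u * B i) := by
    intro i u
    have hthis := mul_list_phase (B i) (List.finRange n)
      (fun j => A j ^ (u j).val) (fun j => u j * (if i = j then 1 else 0))
      (by
        intro j _
        have h := comm_pow_right (hBA i j) (u j).val
        rwa [ZMod.natCast_val, ZMod.cast_id] at h)
    have hPA : prodPow A u
        = ((List.finRange n).map (fun j => A j ^ (u j).val)).prod := rfl
    rw [hPA, hthis]
    congr 2
    rw [← Fin.sum_univ_def]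
    simp
  have hcross : ∀ (t u : Fin n → ZMod p),
      prodPow B t * prodPow A u
        = zc p (∑ i, t i * u i) • (prodPow A u * prodPow B t) := by
    intro t u
    have hthis := list_phase_mul (prodPow A u) (List.finRange n)
      (fun i => B i ^ (t i).val) (fun i => t i * u i)
      (by
        intro j _
        have h := comm_pow_left (hBX j u) (t j).val
        rwa [ZMod.natCast_val, ZMod.cast_id] at h)
    have hBt : prodPow B t
        = ((List.finRange n).map (fun i => B i ^ (t i).val)).prod := rfl
    rw [hBt, hthis]
    congr 2
  have hfix : ∀ t : Fin n → ZMod p, (prodPow B t).mulVec ψ = ψ := by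
    intro t
    rw [prodPow]
    apply list_prod_mulVec_fix
    intro M hM
    obtain ⟨i, _, rfl⟩ := List.mem_map.1 hM
    exact mulVec_pow_fix (hψ i) _
  constructor
  · intro s
    have key : U * XZ ((s, 0) : PV p n) = prodPow A s * U := by
      apply matrix_ext_delta
      intro u
      rw [← Matrix.mulVec_mulVec, XZ_s0_mulVec, hUdef, ← Matrix.mulVec_mulVec,
        hUdef, Matrix.mulVec_mulVec, add_comm u s, prodPow_add A hAcomm hApow]
    rw [key, mul_assoc, hU.1, mul_one]
  · intro t
    have key : U * XZ ((0, t) : PV p n) = prodPow B t * U := by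
      apply matrix_ext_delta
      intro u
      rw [← Matrix.mulVec_mulVec, XZ_0t_mulVec, Matrix.mulVec_smul, hUdef,
        ← Matrix.mulVec_mulVec, hUdef, Matrix.mulVec_mulVec, hcross t u,
        Matrix.smul_mulVec, ← Matrix.mulVec_mulVec, hfix t]
    rw [key, mul_assoc, hU.1, mul_one]
end

section
/- Let p be a prime and 0 ≤ m ≤ n, and let N be the number of m-dimensional ZMod p-subspaces W of (ZMod p)^{2n} that are self-orthogonal with respect to the symplectic inner product, i.e., W ⊆ W^⊥. Then N · Π_{i=0}^{m−1} (p^m − p^i) = Π_{i=0}^{m−1} (p^{2n−i} − p^i); equivalently, N = Π_{i=0}^{m−1} (p^{2n−i} − p^i)/(p^m − p^i). -/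
open scoped BigOperators

/-!
Count the linearly independent `m`-tuples `(v₁, …, vₘ)` with `⟨vᵢ, vⱼ⟩ = 0` in two ways.
Choosing the vectors one at a time, `v_{k+1}` ranges over
`span(v₁, …, v_k)ᗮ \ span(v₁, …, v_k)`, which has `p ^ (2n - k) - p ^ k` elements because the
form is alternating and nondegenerate.
Grouping the tuples instead by the self-orthogonal subspace `W` they span, each `W` of dimension
`m` is spanned by exactly its `∏ i < m, (p ^ m - p ^ i)` ordered bases.
-/

open Module Submodule

theorem Nat.card_eq_mul_of_forall_card_fiber {α β : Type*} [Finite α] [Finite β] (f : α → β)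
    (c : ℕ) (h : ∀ b, Nat.card {a // f a = b} = c) : Nat.card α = Nat.card β * c := by
  have := Fintype.ofFinite β
  rw [← Nat.card_congr (Equiv.sigmaFiberEquiv f), Nat.card_sigma,
    Finset.sum_congr rfl fun b _ => h b, Finset.sum_const, Finset.card_univ, smul_eq_mul,
    Nat.card_eq_fintype_card]

section FiniteField

variable {K V : Type*} [Field K] [Fintype K] [AddCommGroup V] [Module K V] [Finite V]

local notation "q" => Fintype.card K

theorem Submodule.natCard_eq_pow_finrank (W : Submodule K V) : Nat.card W = q ^ finrank K W := by
  rw [Module.natCard_eq_pow_finrank (K := K), Nat.card_eq_fintype_card]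

theorem Submodule.natCard_mem_and_notMem {S P : Submodule K V} (h : S ≤ P) :
    Nat.card {w // w ∈ P ∧ w ∉ S} = q ^ finrank K P - q ^ finrank K S := by
  rw [← S.natCard_eq_pow_finrank, ← P.natCard_eq_pow_finrank, ← SetLike.coe_sort_coe P,
    ← SetLike.coe_sort_coe S, Nat.card_coe_set_eq, Nat.card_coe_set_eq, ← Set.ncard_sdiff h,
    ← Nat.card_coe_set_eq]
  rfl

def Submodule.linearIndependentSpanEquiv {k : ℕ} (W : Submodule K V) (hW : finrank K W = k) :
    {v : Fin k → V // LinearIndependent K v ∧ span K (Set.range v) = W} ≃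
      {s : Fin k → W // LinearIndependent K s} where
  toFun v := ⟨fun i => ⟨v.1 i, v.2.2.le (subset_span ⟨i, rfl⟩)⟩,
    .of_comp W.subtype v.2.1⟩
  invFun s := ⟨fun i => s.1 i, s.2.map' W.subtype W.ker_subtype, by
    have htop : span K (Set.range s.1) = ⊤ :=
      eq_top_of_finrank_eq (by rw [finrank_span_eq_card s.2, Fintype.card_fin, hW])
    rw [Set.range_comp', ← W.coe_subtype, ← map_span, htop, map_subtype_top]⟩
  left_inv v := rfl
  right_inv s := rfl

theorem Nat.card_linearIndependent_and_span (P : Submodule K V → Prop) (k : ℕ) :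
    Nat.card {v : Fin k → V // LinearIndependent K v ∧ P (span K (Set.range v))} =
      Nat.card {W : Submodule K V // finrank K W = k ∧ P W} *
        ∏ i : Fin k, (q ^ k - q ^ (i : ℕ)) := by
  refine Nat.card_eq_mul_of_forall_card_fiber (fun v => ⟨span K (Set.range v.1),
    by rw [finrank_span_eq_card v.2.1, Fintype.card_fin], v.2.2⟩) _ fun W => ?_
  calc Nat.card _
        = Nat.card {v : Fin k → V // LinearIndependent K v ∧ span K (Set.range v) = W.1} :=
        Nat.card_congr
          { toFun a := ⟨a.1.1, a.1.2.1, congrArg Subtype.val a.2⟩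
            invFun v := ⟨⟨v.1, v.2.1, v.2.2.symm ▸ W.2.2⟩, Subtype.ext v.2.2⟩
            left_inv _ := rfl
            right_inv _ := rfl }
    _ = Nat.card {s : Fin k → W.1 // LinearIndependent K s} :=
        Nat.card_congr (W.1.linearIndependentSpanEquiv W.2.1)
    _ = _ := by rw [card_linearIndependent W.2.1.ge, W.2.1]

end FiniteField

namespace LinearMap.BilinForm

variable {K V : Type*} [Field K] [AddCommGroup V] [Module K V] (B : LinearMap.BilinForm K V)

def isotropicFrames (k : ℕ) : Set (Fin k → V) :=
  {v | LinearIndependent K v ∧ ∀ i j, B (v i) (v j) = 0}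

variable {B}

theorem mem_orthogonal_span_range_iff {ι : Type*} {v : ι → V} {w : V} :
    w ∈ B.orthogonal (span K (Set.range v)) ↔ ∀ i, B (v i) w = 0 := by
  refine ⟨fun h i => h _ (subset_span ⟨i, rfl⟩), fun h x hx => ?_⟩
  have : span K (Set.range v) ≤ LinearMap.ker (B.flip w) :=
    span_le.2 (by rintro _ ⟨i, rfl⟩; exact h i)
  exact this hx

theorem span_range_le_orthogonal_iff {ι : Type*} {v : ι → V} :
    span K (Set.range v) ≤ B.orthogonal (span K (Set.range v)) ↔ ∀ i j, B (v i) (v j) = 0 := by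
  simp only [span_le, Set.range_subset_iff, SetLike.mem_coe, mem_orthogonal_span_range_iff]
  exact forall_comm

theorem snoc_mem_isotropicFrames_iff (hB : B.IsAlt) {k : ℕ} {v : Fin k → V} {w : V} :
    Fin.snoc v w ∈ B.isotropicFrames (k + 1) ↔
      v ∈ B.isotropicFrames k ∧
        w ∈ B.orthogonal (span K (Set.range v)) ∧ w ∉ span K (Set.range v) := by
  simp only [isotropicFrames, Set.mem_ofPred_eq, linearIndependent_finSnoc, Fin.forall_fin_succ',
    Fin.snoc_castSucc, Fin.snoc_last, mem_orthogonal_span_range_iff, hB w]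
  have hrefl : ∀ i, B w (v i) = 0 ↔ B (v i) w = 0 := fun i => hB.isRefl.eq_iff
  simp only [hrefl, forall_and, and_true]
  tauto

theorem init_mem_isotropicFrames (hB : B.IsAlt) {k : ℕ} {u : Fin (k + 1) → V}
    (hu : u ∈ B.isotropicFrames (k + 1)) : Fin.init u ∈ B.isotropicFrames k :=
  ((snoc_mem_isotropicFrames_iff hB).1 (by rwa [Fin.snoc_init_self])).1

def initFiberEquiv (hB : B.IsAlt) {k : ℕ} (v : B.isotropicFrames k) :
    {u : B.isotropicFrames (k + 1) // Fin.init u.1 = v.1} ≃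
      {w // w ∈ B.orthogonal (span K (Set.range v.1)) ∧ w ∉ span K (Set.range v.1)} where
  toFun u := ⟨u.1.1 (Fin.last k), by
    obtain ⟨⟨u, hu⟩, huv⟩ := u
    have := ((snoc_mem_isotropicFrames_iff hB).1 (by rwa [Fin.snoc_init_self])).2
    rwa [huv] at this⟩
  invFun w := ⟨⟨Fin.snoc v.1 w.1, (snoc_mem_isotropicFrames_iff hB).2 ⟨v.2, w.2⟩⟩,
    Fin.init_snoc _ _⟩
  left_inv := by rintro ⟨u, hu⟩; exact Subtype.ext (Subtype.ext (by simp [← hu]))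
  right_inv w := Subtype.ext (by simp)

variable [Fintype K] [Finite V]

local notation "q" => Fintype.card K

theorem natCard_isotropicFrames_succ (hB : B.IsAlt) (hB' : B.Nondegenerate) (k : ℕ) :
    Nat.card (B.isotropicFrames (k + 1)) =
      Nat.card (B.isotropicFrames k) * (q ^ (finrank K V - k) - q ^ k) := by
  refine Nat.card_eq_mul_of_forall_card_fiber
    (fun u => ⟨Fin.init u.1, init_mem_isotropicFrames hB u.2⟩) _ fun v => ?_
  have hv : finrank K (span K (Set.range v.1)) = k := by
    rw [finrank_span_eq_card v.2.1, Fintype.card_fin]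
  rw [Nat.card_congr ((Equiv.subtypeEquivRight fun u => Subtype.ext_iff).trans
      (initFiberEquiv hB v)), natCard_mem_and_notMem (span_range_le_orthogonal_iff.2 v.2.2),
    finrank_orthogonal hB', hv]

theorem natCard_isotropicFrames (hB : B.IsAlt) (hB' : B.Nondegenerate) (k : ℕ) :
    Nat.card (B.isotropicFrames k) = ∏ i ∈ Finset.range k, (q ^ (finrank K V - i) - q ^ i) := by
  induction k with
  | zero =>
    have : B.isotropicFrames 0 = Set.univ :=
      Set.eq_univ_of_forall fun v => ⟨linearIndependent_empty_type, finZeroElim⟩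
    simp [this]
  | succ k ih => rw [natCard_isotropicFrames_succ hB hB', ih, Finset.prod_range_succ]

end LinearMap.BilinForm

section Symplectic

variable {p n : ℕ}

-- `sympOrtho W` is definitionally `(sympB p n).orthogonal W`.
def sympB (p n : ℕ) : LinearMap.BilinForm (ZMod p) (PV p n) :=
  LinearMap.mk₂ (ZMod p) symp
    (fun x y z => by
      simp only [symp, Prod.fst_add, Prod.snd_add, Pi.add_apply, ← Finset.sum_add_distrib]
      exact Finset.sum_congr rfl fun i _ => by ring)
    (fun c x y => by
      simp only [symp, Prod.smul_fst, Prod.smul_snd, Pi.smul_apply, smul_eq_mul, Finset.mul_sum]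
      exact Finset.sum_congr rfl fun i _ => by ring)
    (fun x y z => by
      simp only [symp, Prod.fst_add, Prod.snd_add, Pi.add_apply, ← Finset.sum_add_distrib]
      exact Finset.sum_congr rfl fun i _ => by ring)
    (fun c x y => by
      simp only [symp, Prod.smul_fst, Prod.smul_snd, Pi.smul_apply, smul_eq_mul, Finset.mul_sum]
      exact Finset.sum_congr rfl fun i _ => by ring)

theorem sympB_apply (x y : PV p n) : sympB p n x y = symp x y := rfl

theorem sympB_isAlt : (sympB p n).IsAlt := fun x =>
  show symp x x = 0 from Finset.sum_eq_zero fun i _ => by ring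

theorem sympB_nondegenerate : (sympB p n).Nondegenerate := by
  refine (LinearMap.IsRefl.nondegenerate_iff_separatingLeft
    (sympB_isAlt (p := p) (n := n)).isRefl).2 fun x hx => ?_
  have h₁ (j : Fin n) : x.1 j = 0 := by
    simpa [sympB_apply, symp, Pi.single_apply] using hx (0, Pi.single j 1)
  have h₂ (j : Fin n) : x.2 j = 0 := by
    simpa [sympB_apply, symp, Pi.single_apply] using hx (Pi.single j 1, 0)
  exact Prod.ext (funext h₁) (funext h₂)

theorem finrank_PV [Fact p.Prime] : Module.finrank (ZMod p) (PV p n) = 2 * n := by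
  rw [Module.finrank_prod, Module.finrank_fin_fun]
  ring

end Symplectic

theorem stmt17_general (p n m : ℕ) [Fact p.Prime] :
    Nat.card {W : Submodule (ZMod p) (PV p n) //
        Module.finrank (ZMod p) W = m ∧ W ≤ sympOrtho W} *
      ∏ i ∈ Finset.range m, (p ^ m - p ^ i) =
    ∏ i ∈ Finset.range m, (p ^ (2 * n - i) - p ^ i) := by
  have hframes := LinearMap.BilinForm.natCard_isotropicFrames (B := sympB p n)
    sympB_isAlt sympB_nondegenerate m
  have hcount := Nat.card_linearIndependent_and_span
    (fun W : Submodule (ZMod p) (PV p n) => W ≤ (sympB p n).orthogonal W) m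
  simp only [LinearMap.BilinForm.span_range_le_orthogonal_iff, ZMod.card,
    Fin.prod_univ_eq_prod_range (fun i => p ^ m - p ^ i)] at hcount
  rw [ZMod.card, finrank_PV] at hframes
  exact hcount.symm.trans hframes

/-- the number `N` of `m`-dimensional self-orthogonal subspaces of
`(ZMod p)^{2n}` satisfies `N · ∏_{i=0}^{m-1} (p^m - p^i) = ∏_{i=0}^{m-1} (p^{2n-i} - p^i)`. -/
theorem stmt17 (p n m : ℕ) [Fact p.Prime] (hm : m ≤ n) :
    Nat.card {W : Submodule (ZMod p) (PV p n) //
        Module.finrank (ZMod p) W = m ∧ W ≤ sympOrtho W} *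
      ∏ i ∈ Finset.range m, (p ^ m - p ^ i) =
    ∏ i ∈ Finset.range m, (p ^ (2 * n - i) - p ^ i) :=
  stmt17_general p n m
end
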